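/- arXiv:2411.14547 — 4 statements merged into one kernel-verified Lean document; each statement's English description precedes it below -/
import Mathlib

section
/- Let d ≥ 1, α ≥ 0, M > 0 and λ ∈ (0,1). Let π be a locally finite Borel measure on ℝ^d × ℝ^d whose support is monotone, i.e. (x₁ − x₂)·(y₁ − y₂) ≥ 0 for all (x₁,y₁), (x₂,y₂) ∈ supp π. Let μ⁰ be the first marginal of π (the pushforward of π under (x,y) ↦ x, assumed locally finite) and let μ^λ be the pushforward of π under F_λ(x,y) = (1−λ)x + λy. If μ⁰(B_ρ(x)) ≤ M ρ^α for every x ∈ supp μ⁰ and every ρ > 0, then there is a constant C depending only on α such that μ^λ(B_ρ(x)) ≤ C (1−λ)^{−α} M ρ^α for every x ∈ ℝ^d and every ρ > 0. (Lemma 5.1: upper Ahlfors regularity is preserved under displacement interpolation along a monotone plan.) -/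
open MeasureTheory Metric
open scoped RealInnerProductSpace ENNReal

/-- The (topological) support of a measure: the set of points all of whose neighbourhoods have
positive measure. -/
def msupp {X : Type*} [TopologicalSpace X] [MeasurableSpace X]
    (μ : Measure X) : Set X :=
  {x | ∀ U ∈ nhds x, μ U ≠ 0}

lemma msupp_compl_null {X : Type*} [TopologicalSpace X] [MeasurableSpace X]
    [SecondCountableTopology X] (μ : Measure X) :
    μ (msupp μ)ᶜ = 0 := by
  set S : Set (Set X) := {U | IsOpen U ∧ μ U = 0} with hS
  have hsub : (msupp μ)ᶜ ⊆ ⋃₀ S := by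
    intro x hx
    simp only [msupp, Set.mem_compl_iff, Set.mem_setOf_eq, not_forall] at hx
    obtain ⟨U, hU, hU0⟩ := hx
    rcases mem_nhds_iff.mp hU with ⟨V, hVU, hVopen, hxV⟩
    refine ⟨V, ⟨hVopen, ?_⟩, hxV⟩
    · simp only [not_not] at hU0
      exact le_antisymm (hU0 ▸ measure_mono hVU) zero_le
  obtain ⟨T, hTc, hTS, hTU⟩ := TopologicalSpace.isOpen_sUnion_countable S (fun s hs => hs.1)
  have : μ (⋃₀ T) = 0 := (measure_sUnion_null_iff hTc).2 fun s hs => (hTS hs).2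
  exact le_antisymm (le_trans (measure_mono (hTU ▸ hsub)) this.le) zero_le

/-- **Lemma 5.1.** Upper `α`-Ahlfors regularity of the first marginal of a monotone
transport plan is inherited, up to a factor `C (1-λ)^{-α}`, by the displacement interpolant
`μ^λ = F_λ # π`, where `F_λ(x,y) = (1-λ)x + λy`. -/
theorem stmt0 (α : ℝ) (hα : 0 ≤ α) :
    ∃ C : ℝ, 0 < C ∧
      ∀ (d : ℕ), 1 ≤ d →
      ∀ (M : ℝ), 0 < M →
      ∀ lam : ℝ, lam ∈ Set.Ioo (0 : ℝ) 1 →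
      ∀ π : Measure (EuclideanSpace ℝ (Fin d) × EuclideanSpace ℝ (Fin d)),
        IsLocallyFiniteMeasure π →
        (∀ p ∈ msupp π, ∀ q ∈ msupp π, 0 ≤ ⟪p.1 - q.1, p.2 - q.2⟫) →
        IsLocallyFiniteMeasure (π.map Prod.fst) →
        (∀ x ∈ msupp (π.map Prod.fst), ∀ ρ : ℝ, 0 < ρ →
          (π.map Prod.fst) (ball x ρ) ≤ ENNReal.ofReal (M * ρ ^ α)) →
        ∀ x : EuclideanSpace ℝ (Fin d), ∀ ρ : ℝ, 0 < ρ →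
          (π.map fun p => (1 - lam) • p.1 + lam • p.2) (ball x ρ)
            ≤ ENNReal.ofReal (C * (1 - lam) ^ (-α) * M * ρ ^ α) := by
  refine ⟨2 ^ α, Real.rpow_pos_of_pos two_pos α, ?_⟩
  intro d hd M hM lam hlam π hπloc hmono hμ0loc hμ0 x ρ hρ
  obtain ⟨hlam0, hlam1⟩ := hlam
  have h1l : (0:ℝ) < 1 - lam := by linarith
  set F : (EuclideanSpace ℝ (Fin d) × EuclideanSpace ℝ (Fin d)) → EuclideanSpace ℝ (Fin d) := fun p => (1 - lam) • p.1 + lam • p.2 with hFdef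
  have hF : Measurable F :=
    by rw [hFdef]; fun_prop
  rw [Measure.map_apply hF measurableSet_ball]
  set S : Set (EuclideanSpace ℝ (Fin d) × EuclideanSpace ℝ (Fin d)) := F ⁻¹' ball x ρ with hSdef
  have hsplit : π S ≤ π (S ∩ msupp π) + 0 := by
    rw [add_zero]
    calc π S ≤ π ((S ∩ msupp π) ∪ (msupp π)ᶜ) := by
          apply measure_mono; intro p hp
          by_cases h : p ∈ msupp π
          · exact Or.inl ⟨hp, h⟩
          · exact Or.inr h
      _ ≤ π (S ∩ msupp π) + π (msupp π)ᶜ := measure_union_le _ _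
      _ = π (S ∩ msupp π) + 0 := by rw [msupp_compl_null]
      _ = π (S ∩ msupp π) := add_zero _
  rw [add_zero] at hsplit
  rcases Set.eq_empty_or_nonempty (S ∩ msupp π) with hempty | ⟨p₀, hp₀S, hp₀supp⟩
  · refine le_trans hsplit ?_
    rw [hempty, measure_empty]
    exact zero_le
  -- key geometric bound
  set r : ℝ := 2 * ρ / (1 - lam) with hrdef
  have hr : 0 < r := by positivity
  have hkey : S ∩ msupp π ⊆ Prod.fst ⁻¹' ball p₀.1 r := by
    rintro q ⟨hqS, hqsupp⟩
    have hin : (0:ℝ) ≤ ⟪q.1 - p₀.1, q.2 - p₀.2⟫ := hmono q hqsupp p₀ hp₀supp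
    have hdistF : dist (F q) (F p₀) < 2 * ρ :=
      (dist_triangle_right _ _ x).trans_lt (by
        have h1 : dist (F q) x < ρ := mem_ball.mp hqS
        have h2 : dist (F p₀) x < ρ := mem_ball.mp hp₀S
        linarith)
    have hFdiff : F q - F p₀ = (1 - lam) • (q.1 - p₀.1) + lam • (q.2 - p₀.2) := by
      simp only [hFdef, smul_sub]; abel
    have hnorm : (1 - lam) * ‖q.1 - p₀.1‖ ≤ ‖F q - F p₀‖ := by
      have hsq : ‖(1 - lam) • (q.1 - p₀.1)‖ ^ 2 ≤ ‖F q - F p₀‖ ^ 2 := by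
        rw [hFdiff, norm_add_sq_real]
        have hcross : (0:ℝ) ≤ ⟪(1 - lam) • (q.1 - p₀.1), lam • (q.2 - p₀.2)⟫ := by
          rw [real_inner_smul_left, real_inner_smul_right]
          positivity
        nlinarith [norm_nonneg (lam • (q.2 - p₀.2))]
      have h := Real.sqrt_le_sqrt hsq
      rwa [Real.sqrt_sq (norm_nonneg _), Real.sqrt_sq (norm_nonneg _), norm_smul,
        Real.norm_eq_abs, abs_of_pos h1l] at h
    have hd : dist q.1 p₀.1 < r := by
      rw [dist_eq_norm]
      rw [hrdef, lt_div_iff₀ h1l]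
      calc ‖q.1 - p₀.1‖ * (1 - lam) = (1 - lam) * ‖q.1 - p₀.1‖ := mul_comm _ _
        _ ≤ ‖F q - F p₀‖ := hnorm
        _ = dist (F q) (F p₀) := (dist_eq_norm _ _).symm
        _ < 2 * ρ := hdistF
    exact hd
  have hp₀1 : p₀.1 ∈ msupp (π.map Prod.fst) := by
    intro U hU
    rcases _root_.mem_nhds_iff.mp hU with ⟨V, hVU, hVopen, hxV⟩
    have hV : π.map Prod.fst V ≠ 0 := by
      rw [Measure.map_apply measurable_fst hVopen.measurableSet]
      exact hp₀supp _ ((hVopen.preimage continuous_fst).mem_nhds hxV)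
    exact fun h0 => hV (le_antisymm (h0 ▸ measure_mono hVU) zero_le)
  calc π S ≤ π (S ∩ msupp π) := hsplit
    _ ≤ π (Prod.fst ⁻¹' ball p₀.1 r) := measure_mono hkey
    _ = (π.map Prod.fst) (ball p₀.1 r) :=
        (Measure.map_apply measurable_fst measurableSet_ball).symm
    _ ≤ ENNReal.ofReal (M * r ^ α) := hμ0 p₀.1 hp₀1 r hr
    _ = ENNReal.ofReal (2 ^ α * (1 - lam) ^ (-α) * M * ρ ^ α) := by
        congr 1
        rw [hrdef, Real.div_rpow (by positivity) h1l.le,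
          Real.mul_rpow (by norm_num) hρ.le, Real.rpow_neg h1l.le]
        ring
end

section
/- Let s ∈ (0,1) and γ > 0. There exists a constant C depending only on s and γ such that for every finite signed measure σ on 𝕋 with σ(𝕋) = 0, ∑_{k ∈ ℤ, k ≠ 0} |k|^{−2s} |σ̂_k|² ≤ C ∫₀¹ η^{2s+γ−1} ( ∑_{k ∈ ℤ, 0 < |k| ≤ 1/η} |k|^{γ} |σ̂_k|² ) dη, where both sides are interpreted as values in [0,∞]. (Proposition 2.13, first characterization of the Ḣ^{−s} norm, in dimension d = 1.) -/
open MeasureTheory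
open scoped ENNReal

/-- The `k`-th Fourier coefficient `σ̂_k = ∫_𝕋 exp(2πikx) dσ(x)` of a finite signed measure on the
circle, defined through its Jordan decomposition. -/
noncomputable def sfc (σ : SignedMeasure UnitAddCircle) (k : ℤ) : ℂ :=
  (∫ x, fourier k x ∂σ.toJordanDecomposition.posPart) -
    (∫ x, fourier k x ∂σ.toJordanDecomposition.negPart)

lemma lint_rpow {p : ℝ} (hp : -1 < p) {r : ℝ} (hr : 0 < r) :
    ∫⁻ η in Set.Ioo (0:ℝ) r, ENNReal.ofReal (η ^ p) =
      ENNReal.ofReal (r ^ (p+1) / (p+1)) := by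
  have hint : IntegrableOn (fun x : ℝ => x ^ p) (Set.Ioo 0 r) := by
    have := (intervalIntegral.intervalIntegrable_rpow' hp (a := 0) (b := r))
    rw [intervalIntegrable_iff_integrableOn_Ioc_of_le hr.le] at this
    exact this.mono_set Set.Ioo_subset_Ioc_self
  rw [← ofReal_integral_eq_lintegral_ofReal hint ?nn]
  case nn =>
    filter_upwards [ae_restrict_mem measurableSet_Ioo] with x hx
    exact (Real.rpow_pos_of_pos hx.1 p).le
  congr 1
  rw [← MeasureTheory.integral_Ioc_eq_integral_Ioo, ← intervalIntegral.integral_of_le hr.le,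
    integral_rpow (Or.inl hp)]
  rw [Real.zero_rpow (by linarith), sub_zero]


/-- **Proposition 2.13, first characterization, d = 1.** For every finite signed
measure `σ` on `𝕋` with `σ(𝕋) = 0`,
`∑_{k≠0} |k|^{-2s} |σ̂_k|² ≤ C ∫₀¹ η^{2s+γ-1} (∑_{0<|k|≤1/η} |k|^γ |σ̂_k|²) dη`. -/
theorem stmt3 (s γ : ℝ) (hs : s ∈ Set.Ioo (0 : ℝ) 1) (hγ : 0 < γ) :
    ∃ C : ℝ, 0 < C ∧
      ∀ σ : SignedMeasure UnitAddCircle, σ Set.univ = 0 →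
        (∑' k : ℤ, if k = 0 then 0 else
            (k.natAbs : ℝ≥0∞) ^ (-(2 * s)) * (‖sfc σ k‖₊ : ℝ≥0∞) ^ 2)
          ≤ ENNReal.ofReal C *
            ∫⁻ η in Set.Ioo (0 : ℝ) 1,
              ENNReal.ofReal (η ^ (2 * s + γ - 1)) *
                ∑' k : ℤ, if k ≠ 0 ∧ (k.natAbs : ℝ) ≤ 1 / η then
                  (k.natAbs : ℝ≥0∞) ^ γ * (‖sfc σ k‖₊ : ℝ≥0∞) ^ 2 else 0 := by
  obtain ⟨hs0, hs1⟩ := hs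
  set q : ℝ := 2 * s + γ with hq
  have hq0 : 0 < q := by positivity
  refine ⟨q, hq0, fun σ _ => ?_⟩
  set p : ℝ := 2 * s + γ - 1 with hp
  have hp1 : -1 < p := by simp only [hp]; linarith
  set a : ℤ → ℝ≥0∞ := fun k => (k.natAbs : ℝ≥0∞) ^ γ * (‖sfc σ k‖₊ : ℝ≥0∞) ^ 2 with ha
  have hrpm : Measurable (fun η : ℝ => η ^ p) := by measurability
  have hmeas : ∀ k : ℤ, Measurable (fun η : ℝ =>
      ENNReal.ofReal (η ^ p) * (if k ≠ 0 ∧ (k.natAbs : ℝ) ≤ 1 / η then a k else 0)) := by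
    intro k
    refine (ENNReal.measurable_ofReal.comp hrpm).mul ?_
    by_cases hk : k = 0
    · simp [hk]
    · simp only [hk, ne_eq, not_false_eq_true, true_and]
      exact Measurable.ite
        (measurableSet_le measurable_const (measurable_const.div measurable_id))
        measurable_const measurable_const
  have hswap : (∫⁻ η in Set.Ioo (0 : ℝ) 1,
        ENNReal.ofReal (η ^ p) *
          ∑' k : ℤ, if k ≠ 0 ∧ (k.natAbs : ℝ) ≤ 1 / η then a k else 0)
      = ∑' k : ℤ, ∫⁻ η in Set.Ioo (0 : ℝ) 1,
          ENNReal.ofReal (η ^ p) * (if k ≠ 0 ∧ (k.natAbs : ℝ) ≤ 1 / η then a k else 0) := by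
    rw [← lintegral_tsum (fun k => (hmeas k).aemeasurable)]
    congr 1
    ext η
    exact (ENNReal.tsum_mul_left).symm
  rw [hswap, ← ENNReal.tsum_mul_left]
  refine ENNReal.tsum_le_tsum fun k => ?_
  by_cases hk : k = 0
  · simp [hk]
  · simp only [hk, if_false, ne_eq, not_false_eq_true, true_and]
    set n : ℕ := k.natAbs with hn
    have hn1 : 1 ≤ n := Int.natAbs_pos.mpr hk
    have hnR : (0:ℝ) < n := by exact_mod_cast hn1
    set r : ℝ := 1 / n with hr
    have hr0 : 0 < r := by positivity
    have hr1 : r ≤ 1 := by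
      rw [hr, div_le_one hnR]; exact_mod_cast hn1
    have hset : (Set.Ioo (0:ℝ) 1 ∩ {η : ℝ | (n : ℝ) ≤ 1 / η} : Set ℝ)
        =ᵐ[volume] Set.Ioo (0:ℝ) r := by
      have he : (Set.Ioo (0:ℝ) 1 ∩ {η : ℝ | (n : ℝ) ≤ 1 / η} : Set ℝ)
          = Set.Ioo (0:ℝ) 1 ∩ Set.Ioc 0 r := by
        ext η
        simp only [Set.mem_inter_iff, Set.mem_Ioo, Set.mem_setOf_eq, Set.mem_Ioc]
        constructor
        · rintro ⟨⟨h0, h1⟩, hle⟩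
          refine ⟨⟨h0, h1⟩, h0, ?_⟩
          rw [hr, le_div_iff₀ hnR, mul_comm, ← le_div_iff₀ h0]
          exact hle
        · rintro ⟨⟨h0, h1⟩, _, hle⟩
          refine ⟨⟨h0, h1⟩, ?_⟩
          rw [le_div_iff₀ h0]
          rw [hr, le_div_iff₀ hnR, mul_comm] at hle
          exact hle
      rw [he]
      have h2 : (Set.Ioo (0:ℝ) 1 ∩ Set.Ioc 0 r : Set ℝ)
          =ᵐ[volume] (Set.Ioo (0:ℝ) 1 ∩ Set.Ioo 0 r : Set ℝ) :=
        (Filter.EventuallyEq.refl _ _).inter Ioo_ae_eq_Ioc.symm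
      have h3 : (Set.Ioo (0:ℝ) 1 ∩ Set.Ioo 0 r : Set ℝ) = Set.Ioo (0:ℝ) r := by
        rw [Set.inter_eq_right]
        exact Set.Ioo_subset_Ioo le_rfl hr1
      exact h2.trans (by rw [h3]; exact Filter.EventuallyEq.rfl)
    have hmsc : MeasurableSet {η : ℝ | (n : ℝ) ≤ 1 / η} :=
      measurableSet_le measurable_const (measurable_const.div measurable_id)
    have hI : (∫⁻ η in Set.Ioo (0 : ℝ) 1,
          ENNReal.ofReal (η ^ p) * (if (n : ℝ) ≤ 1 / η then a k else 0))
        = ENNReal.ofReal (r ^ q / q) * a k := by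
      have h1 : (fun η : ℝ => ENNReal.ofReal (η ^ p) * (if (n : ℝ) ≤ 1 / η then a k else 0))
          = Set.indicator {η : ℝ | (n : ℝ) ≤ 1 / η} (fun η => ENNReal.ofReal (η ^ p) * a k) := by
        ext η
        simp [Set.indicator_apply, Set.mem_setOf_eq, mul_ite, mul_zero, -one_div]
      rw [h1, lintegral_indicator hmsc, Measure.restrict_restrict hmsc,
        Set.inter_comm, setLIntegral_congr hset,
        lintegral_mul_const _ hrpm.ennreal_ofReal]
      congr 1
      have hpq : p + 1 = q := by rw [hp, hq]; ring
      rw [lint_rpow hp1 hr0, hpq]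
    rw [hI]
    have hrq : r ^ q / q * q = r ^ q := div_mul_cancel₀ _ hq0.ne'
    have hofq : ENNReal.ofReal q * (ENNReal.ofReal (r ^ q / q) * a k)
        = ENNReal.ofReal (r ^ q) * a k := by
      rw [← mul_assoc, ← ENNReal.ofReal_mul hq0.le, mul_comm q _, hrq]
    rw [hofq]
    have hr_pow : ENNReal.ofReal (r ^ q) = (n : ℝ≥0∞) ^ (-q) := by
      rw [hr, one_div, Real.inv_rpow hnR.le, ← Real.rpow_neg hnR.le,
        ← ENNReal.ofReal_rpow_of_pos hnR, ENNReal.ofReal_natCast]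
    rw [hr_pow, ha]
    have hne0 : (n : ℝ≥0∞) ≠ 0 := Nat.cast_ne_zero.mpr (by omega)
    have hnetop : (n : ℝ≥0∞) ≠ ⊤ := ENNReal.natCast_ne_top n
    rw [← mul_assoc, ← ENNReal.rpow_add _ _ hne0 hnetop]
    apply le_of_eq
    congr 1
    rw [hq]; ring
end

section
/- Let s ∈ (0,1), and let ρ₁, ε₀ be as above. Define F(t) = ∫_ℝ ρ₁(x) exp(2πi t x) dx for t ∈ ℝ. Then there exists a constant c > 0, depending only on s, ρ₁ and ε₀, such that for every k ∈ ℤ with k ≠ 0, ∫₀^{ε₀} ε^{2s−1} |F(εk)|² dε ≥ c |k|^{−2s}. (Key claim in the proof of Proposition 2.13: the Fourier transform of the mollifier, averaged over scales, is bounded below by |k|^{−2s}.) -/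
open MeasureTheory Real

/-- The Fourier transform `F(t) = ∫_ℝ ρ₁(x) exp(2πitx) dx` of the kernel `ρ₁`. -/
noncomputable def kernelFT (ρ₁ : ℝ → ℝ) (t : ℝ) : ℂ :=
  ∫ x : ℝ, (ρ₁ x : ℂ) * Complex.exp (2 * Real.pi * Complex.I * t * x)

section aux

variable {ρ₁ : ℝ → ℝ} (hcont : Continuous ρ₁) (hpos : ∀ x, 0 ≤ ρ₁ x)
    (hsupp : ∀ x, x ∉ Set.Icc (-1 : ℝ) 1 → ρ₁ x = 0) (hint : (∫ x, ρ₁ x) = 1)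

lemma norm_exp_eq_one (t x : ℝ) : ‖Complex.exp (2 * Real.pi * Complex.I * t * x)‖ = 1 := by
  rw [Complex.norm_exp]
  have : (2 * Real.pi * Complex.I * t * x).re = 0 := by simp
  rw [this, Real.exp_zero]

include hcont hsupp in
lemma rho_integrable : Integrable ρ₁ :=
  hcont.integrable_of_hasCompactSupport (HasCompactSupport.intro isCompact_Icc hsupp)

include hcont hsupp in
lemma kernelFT_integrand_integrable (t : ℝ) :
    Integrable (fun x : ℝ => (ρ₁ x : ℂ) * Complex.exp (2 * Real.pi * Complex.I * t * x)) := by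
  have hcs : HasCompactSupport (fun x : ℝ => (ρ₁ x : ℂ)) :=
    HasCompactSupport.intro (isCompact_Icc (a := (-1:ℝ)) (b := 1)) (fun x hx => by simp [hsupp x hx])
  have hcs2 : HasCompactSupport
      (fun x : ℝ => (ρ₁ x : ℂ) * Complex.exp (2 * Real.pi * Complex.I * t * x)) :=
    hcs.mul_right
  refine Continuous.integrable_of_hasCompactSupport ?_ hcs2
  exact (Complex.continuous_ofReal.comp hcont).mul (Complex.continuous_exp.comp (by continuity))

omit hcont hsupp in
include hpos in
lemma kernelFT_norm_le (t : ℝ) : ‖kernelFT ρ₁ t‖ ≤ ∫ x, ρ₁ x := by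
  refine (norm_integral_le_integral_norm _).trans_eq ?_
  congr 1; ext x
  simp [norm_exp_eq_one t x, abs_of_nonneg (hpos x)]

end aux

section aux2

variable {ρ₁ : ℝ → ℝ} (hcont : Continuous ρ₁) (hpos : ∀ x, 0 ≤ ρ₁ x)
    (hsupp : ∀ x, x ∉ Set.Icc (-1 : ℝ) 1 → ρ₁ x = 0) (hint : (∫ x, ρ₁ x) = 1)

include hcont hpos hsupp in
lemma kernelFT_continuous : Continuous (kernelFT ρ₁) := by
  have : Continuous fun t : ℝ =>
      ∫ x : ℝ, (ρ₁ x : ℂ) * Complex.exp (2 * Real.pi * Complex.I * t * x) := by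
    refine continuous_of_dominated (μ := (volume : Measure ℝ)) (bound := ρ₁)
      (F := fun (t : ℝ) (x : ℝ) => (ρ₁ x : ℂ) * Complex.exp (2 * Real.pi * Complex.I * t * x))
      ?_ ?_ ?_ ?_
    · intro t; exact (kernelFT_integrand_integrable hcont hsupp t).aestronglyMeasurable
    · intro t; filter_upwards with x
      rw [norm_mul, norm_exp_eq_one, mul_one, Complex.norm_real, Real.norm_eq_abs,
        abs_of_nonneg (hpos x)]
    · exact rho_integrable hcont hsupp
    · filter_upwards with x
      exact continuous_const.mul (Complex.continuous_exp.comp (by continuity))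
  exact this

include hcont hpos hsupp hint in
lemma kernelFT_lower (t : ℝ) (ht : |t| ≤ 1 / (8 * Real.pi)) :
    1 / 2 ≤ ‖kernelFT ρ₁ t‖ := by
  have hπ := Real.pi_pos
  have h1 : (∫ x : ℝ, (ρ₁ x : ℂ)) = 1 := by
    have h0 : (∫ x : ℝ, (ρ₁ x : ℂ)) = ((∫ x, ρ₁ x : ℝ) : ℂ) := integral_ofReal
    rw [h0, hint, Complex.ofReal_one]
  have hdiff : kernelFT ρ₁ t - 1 =
      ∫ x : ℝ, (ρ₁ x : ℂ) * (Complex.exp (2 * Real.pi * Complex.I * t * x) - 1) := by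
    calc kernelFT ρ₁ t - 1
        = (∫ x : ℝ, (ρ₁ x : ℂ) * Complex.exp (2 * Real.pi * Complex.I * t * x))
            - ∫ x : ℝ, (ρ₁ x : ℂ) := by rw [h1]; rfl
      _ = ∫ x : ℝ, ((ρ₁ x : ℂ) * Complex.exp (2 * Real.pi * Complex.I * t * x) - (ρ₁ x : ℂ)) :=
          (integral_sub (kernelFT_integrand_integrable hcont hsupp t)
            ((rho_integrable hcont hsupp).ofReal)).symm
      _ = ∫ x : ℝ, (ρ₁ x : ℂ) * (Complex.exp (2 * Real.pi * Complex.I * t * x) - 1) := by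
          congr 1; ext x; ring
  have hbound : ‖kernelFT ρ₁ t - 1‖ ≤ ∫ x, ρ₁ x * (4 * Real.pi * |t|) := by
    rw [hdiff]
    refine norm_integral_le_of_norm_le ((rho_integrable hcont hsupp).mul_const _) ?_
    filter_upwards with x
    rw [norm_mul, Complex.norm_real, Real.norm_eq_abs, abs_of_nonneg (hpos x)]
    by_cases hx : x ∈ Set.Icc (-1 : ℝ) 1
    · refine mul_le_mul_of_nonneg_left ?_ (hpos x)
      have habs : ‖2 * Real.pi * Complex.I * t * x‖ = 2 * Real.pi * (|t| * |x|) := by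
        simp [abs_of_pos hπ, abs_of_pos (by positivity : (0:ℝ) < 2), mul_assoc]
      have hxle : |x| ≤ 1 := abs_le.2 ⟨hx.1, hx.2⟩
      have hle1 : ‖2 * Real.pi * Complex.I * t * x‖ ≤ 1 := by
        rw [habs]
        calc 2 * Real.pi * (|t| * |x|) ≤ 2 * Real.pi * (1 / (8 * Real.pi) * 1) := by
              apply mul_le_mul_of_nonneg_left (mul_le_mul ht hxle (abs_nonneg x) (by positivity))
              positivity
          _ ≤ 1 := by
              rw [mul_one, mul_one_div, div_le_one (by positivity)]
              linarith
      calc ‖Complex.exp (2 * Real.pi * Complex.I * t * x) - 1‖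
          ≤ 2 * ‖2 * Real.pi * Complex.I * t * x‖ := by
            exact Complex.norm_exp_sub_one_le hle1
        _ = 4 * Real.pi * (|t| * |x|) := by rw [habs]; ring
        _ = 4 * Real.pi * |t| * |x| := by ring
        _ ≤ 4 * Real.pi * |t| := mul_le_of_le_one_right (by positivity) hxle
    · simp [hsupp x hx]
  have hint2 : (∫ x, ρ₁ x * (4 * Real.pi * |t|)) = 4 * Real.pi * |t| := by
    rw [integral_mul_const, hint, one_mul]
  have h2 : ‖kernelFT ρ₁ t - 1‖ ≤ 1 / 2 := by
    refine hbound.trans ?_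
    rw [hint2]
    calc 4 * Real.pi * |t| ≤ 4 * Real.pi * (1 / (8 * Real.pi)) := by
          exact mul_le_mul_of_nonneg_left ht (by positivity)
      _ = 1 / 2 := by field_simp; ring
  have h3 := norm_sub_norm_le (1 : ℂ) (kernelFT ρ₁ t)
  rw [norm_sub_rev] at h3
  simp only [norm_one] at h3
  linarith

end aux2

/-- For `s ∈ (0,1)` and a kernel `ρ₁` as in Proposition 2.13, there is `c > 0`
(depending only on `s`, `ρ₁`, `ε₀`) with `∫₀^{ε₀} ε^{2s-1} |F(εk)|² dε ≥ c |k|^{-2s}` for every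
nonzero `k ∈ ℤ`. -/
theorem stmt5 (s ε₀ : ℝ) (hs : s ∈ Set.Ioo (0 : ℝ) 1) (hε₀ : ε₀ ∈ Set.Ioo (0 : ℝ) (1 / 2))
    (ρ₁ : ℝ → ℝ) (hcont : Continuous ρ₁) (hpos : ∀ x, 0 ≤ ρ₁ x)
    (hsupp : ∀ x, x ∉ Set.Icc (-1 : ℝ) 1 → ρ₁ x = 0) (hint : (∫ x, ρ₁ x) = 1) :
    ∃ c : ℝ, 0 < c ∧
      ∀ k : ℤ, k ≠ 0 →
        c * (k.natAbs : ℝ) ^ (-(2 * s))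
          ≤ ∫ ε in Set.Ioo (0 : ℝ) ε₀, ε ^ (2 * s - 1) * ‖kernelFT ρ₁ (ε * k)‖ ^ 2 := by
  obtain ⟨hs0, hs1⟩ := hs
  obtain ⟨hε0, hε12⟩ := hε₀
  have hπ := Real.pi_pos
  set δ : ℝ := 1 / (8 * Real.pi) with hδdef
  have hδpos : 0 < δ := by positivity
  set m : ℝ := min ε₀ δ with hmdef
  have hm : 0 < m := lt_min hε0 hδpos
  refine ⟨m ^ (2 * s) / (8 * s), by positivity, ?_⟩
  intro k hk
  set K : ℝ := |(k : ℝ)| with hKdef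
  have hK0 : 0 < K := abs_pos.2 (Int.cast_ne_zero.2 hk)
  have hK1 : 1 ≤ K := by
    rw [hKdef, ← Int.cast_abs]
    exact_mod_cast Int.one_le_abs hk
  set a : ℝ := min ε₀ (δ / K) with hadef
  have ha0 : 0 < a := lt_min hε0 (by positivity)
  have haε : a ≤ ε₀ := min_le_left _ _
  have hsub : Set.Ioo (0 : ℝ) a ⊆ Set.Ioo (0 : ℝ) ε₀ := Set.Ioo_subset_Ioo_right haε
  have hFle : ∀ t, ‖kernelFT ρ₁ t‖ ≤ 1 := fun t => (kernelFT_norm_le hpos t).trans_eq hint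
  -- integrability of the power function
  have hrint : IntegrableOn (fun ε : ℝ => ε ^ (2 * s - 1)) (Set.Ioo 0 ε₀) := by
    have h1 : IntervalIntegrable (fun ε : ℝ => ε ^ (2 * s - 1)) volume 0 ε₀ :=
      intervalIntegral.intervalIntegrable_rpow' (by linarith)
    exact ((intervalIntegrable_iff_integrableOn_Ioc_of_le hε0.le).1 h1).mono_set
      Set.Ioo_subset_Ioc_self
  set g : ℝ → ℝ := fun ε => ε ^ (2 * s - 1) * ‖kernelFT ρ₁ (ε * k)‖ ^ 2 with hgdef
  have hgmeas : AEStronglyMeasurable g (volume.restrict (Set.Ioo 0 ε₀)) := by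
    refine ContinuousOn.aestronglyMeasurable (ContinuousOn.mul ?_ ?_) measurableSet_Ioo
    · intro ε hε
      exact (Real.continuousAt_rpow_const ε _ (Or.inl hε.1.ne')).continuousWithinAt
    · exact (((kernelFT_continuous hcont hpos hsupp).comp
        (continuous_id.mul continuous_const)).norm.pow 2).continuousOn
  have hgint : IntegrableOn g (Set.Ioo 0 ε₀) := by
    refine Integrable.mono' hrint hgmeas ?_
    refine (ae_restrict_iff' measurableSet_Ioo).2 (ae_of_all _ fun ε hε => ?_)
    have h0 : (0 : ℝ) ≤ ε ^ (2 * s - 1) := Real.rpow_nonneg hε.1.le _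
    rw [Real.norm_eq_abs, abs_of_nonneg (by positivity)]
    calc ε ^ (2 * s - 1) * ‖kernelFT ρ₁ (ε * k)‖ ^ 2
        ≤ ε ^ (2 * s - 1) * 1 := by
          refine mul_le_mul_of_nonneg_left ?_ h0
          calc ‖kernelFT ρ₁ (ε * k)‖ ^ 2 ≤ 1 ^ 2 :=
                pow_le_pow_left₀ (norm_nonneg _) (hFle _) 2
            _ = 1 := one_pow 2
      _ = ε ^ (2 * s - 1) := mul_one _
  have hgnonneg : 0 ≤ᵐ[volume.restrict (Set.Ioo (0:ℝ) ε₀)] g := by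
    refine (ae_restrict_iff' measurableSet_Ioo).2 (ae_of_all _ fun ε hε => ?_)
    exact mul_nonneg (Real.rpow_nonneg hε.1.le _) (by positivity)
  -- step 1 : restrict to (0, a)
  have step1 : ∫ ε in Set.Ioo (0:ℝ) a, g ε ≤ ∫ ε in Set.Ioo (0:ℝ) ε₀, g ε :=
    setIntegral_mono_set hgint hgnonneg (HasSubset.Subset.eventuallyLE hsub)
  -- step 2 : on (0, a) the transform is bounded below
  have step2 : ∫ ε in Set.Ioo (0:ℝ) a, (1/4) * ε ^ (2 * s - 1) ≤ ∫ ε in Set.Ioo (0:ℝ) a, g ε := by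
    refine setIntegral_mono_on ((hrint.mono_set hsub).const_mul _) (hgint.mono_set hsub)
      measurableSet_Ioo (fun ε hε => ?_)
    have hεδ : |ε * (k : ℝ)| ≤ δ := by
      rw [abs_mul, abs_of_pos hε.1]
      have hεle : ε ≤ δ / K := hε.2.le.trans (min_le_right _ _)
      calc ε * K ≤ (δ / K) * K := mul_le_mul_of_nonneg_right hεle hK0.le
        _ = δ := div_mul_cancel₀ δ hK0.ne'
    have hF := kernelFT_lower hcont hpos hsupp hint (ε * k) hεδ
    have hsq : (1/2 : ℝ) ^ 2 ≤ ‖kernelFT ρ₁ (ε * k)‖ ^ 2 := pow_le_pow_left₀ (by norm_num) hF 2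
    have h0 : (0 : ℝ) ≤ ε ^ (2 * s - 1) := Real.rpow_nonneg hε.1.le _
    calc (1/4) * ε ^ (2 * s - 1) = ε ^ (2 * s - 1) * ((1/2 : ℝ)^2) := by ring
      _ ≤ ε ^ (2 * s - 1) * ‖kernelFT ρ₁ (ε * k)‖ ^ 2 := mul_le_mul_of_nonneg_left hsq h0
  -- step 3 : compute the model integral
  have hIoo : ∫ ε in Set.Ioo (0:ℝ) a, ε ^ (2 * s - 1) = a ^ (2 * s) / (2 * s) := by
    rw [← integral_Ioc_eq_integral_Ioo, ← intervalIntegral.integral_of_le ha0.le,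
      integral_rpow (Or.inl (by linarith))]
    have h1 : 2 * s - 1 + 1 = 2 * s := by ring
    rw [h1, Real.zero_rpow (by linarith)]
    ring
  have step3 : ∫ ε in Set.Ioo (0:ℝ) a, (1/4) * ε ^ (2 * s - 1)
      = (1/4) * (a ^ (2 * s) / (2 * s)) := by
    rw [MeasureTheory.integral_const_mul, hIoo]
  -- step 4 : arithmetic lower bound
  have hma : m / K ≤ a := by
    refine le_min ?_ ?_
    · exact (div_le_self hm.le hK1).trans (min_le_left _ _)
    · exact (div_le_div_iff_of_pos_right hK0).2 (min_le_right _ _)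
  have h2 : (m / K) ^ (2 * s) ≤ a ^ (2 * s) :=
    Real.rpow_le_rpow (by positivity) hma (by linarith)
  have h3 : (m / K) ^ (2 * s) = m ^ (2 * s) * K ^ (-(2 * s)) := by
    rw [Real.div_rpow hm.le hK0.le, Real.rpow_neg hK0.le, div_eq_mul_inv]
  have hcast : ((k.natAbs : ℝ)) = K := by rw [Nat.cast_natAbs, Int.cast_abs]
  calc m ^ (2 * s) / (8 * s) * (k.natAbs : ℝ) ^ (-(2 * s))
      = (1/4) * ((m ^ (2 * s) * K ^ (-(2 * s))) / (2 * s)) := by rw [hcast]; ring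
    _ = (1/4) * ((m / K) ^ (2 * s) / (2 * s)) := by rw [h3]
    _ ≤ (1/4) * (a ^ (2 * s) / (2 * s)) := by
        refine mul_le_mul_of_nonneg_left ?_ (by norm_num)
        exact (div_le_div_iff_of_pos_right (by linarith)).2 h2
    _ = ∫ ε in Set.Ioo (0:ℝ) a, (1/4) * ε ^ (2 * s - 1) := step3.symm
    _ ≤ ∫ ε in Set.Ioo (0:ℝ) a, g ε := step2
    _ ≤ ∫ ε in Set.Ioo (0:ℝ) ε₀, g ε := step1
end

section
/- Let 0 < γ ≤ s < 1 and let ρ₁, ε₀, ρ_ε be as above. There exists a constant C depending only on ρ₁ such that for every finite signed measure σ on 𝕋 with σ(𝕋) = 0 and every ε ∈ (0, ε₀), ∑_{k ∈ ℤ, k ≠ 0} |k|^{−2s} |1 − ρ̂_ε(k)|² |σ̂_k|² ≤ C ε^{2(s−γ)} ∑_{k ∈ ℤ, k ≠ 0} |k|^{−2γ} |σ̂_k|², where ρ̂_ε(k) = ∫_𝕋 exp(2πikx) ρ_ε(x) dx; equivalently, ‖σ − ρ_ε * σ‖_{Ḣ^{−s}} ≤ C^{1/2} ε^{s−γ} ‖σ‖_{Ḣ^{−γ}}.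 (Proposition 2.14, in dimension d = 1.) -/
open MeasureTheory Real
open scoped ENNReal

/-- The periodization to the circle `𝕋 = ℝ/ℤ` of the rescaled kernel `ρ_ε(x) = ε⁻¹ ρ₁(x/ε)`. -/
noncomputable def perKernel (ρ₁ : ℝ → ℝ) (ε : ℝ) (z : UnitAddCircle) : ℝ :=
  ∑' n : ℤ, ε⁻¹ * ρ₁ (((((AddCircle.equivIco 1 0) z : ℝ)) + n) / ε)

/-- The `k`-th Fourier coefficient `ρ̂_ε(k) = ∫_𝕋 exp(2πikx) ρ_ε(x) dx` of the periodized
kernel. -/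
noncomputable def rhoHat (ρ₁ : ℝ → ℝ) (ε : ℝ) (k : ℤ) : ℂ :=
  ∫ x : UnitAddCircle, fourier k x * (perKernel ρ₁ ε x : ℂ)

lemma perKernel_eq {ρ₁ : ℝ → ℝ} (hsupp : ∀ x, x ∉ Set.Icc (-1 : ℝ) 1 → ρ₁ x = 0)
    {ε x : ℝ} (hε : 0 < ε) (hε1 : ε < 1/2) (hx : x ∈ Set.Ico (0:ℝ) 1) :
    perKernel ρ₁ ε (↑x : UnitAddCircle) = ε⁻¹ * ρ₁ (x/ε) + ε⁻¹ * ρ₁ ((x-1)/ε) := by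
  unfold perKernel
  have hco : ((AddCircle.equivIco 1 0 (↑x : UnitAddCircle)) : ℝ) = x := by
    rw [AddCircle.coe_equivIco_mk_apply]
    simp [Int.fract_eq_self.2 hx]
  rw [hco]
  have hz : ∀ n : ℤ, n ∉ ({0, -1} : Finset ℤ) → ε⁻¹ * ρ₁ ((x + n) / ε) = 0 := by
    intro n hn
    simp only [Finset.mem_insert, Finset.mem_singleton] at hn
    push_neg at hn
    have h1 : ρ₁ ((x + n) / ε) = 0 := by
      apply hsupp
      intro hmem
      obtain ⟨ha, hb⟩ := hmem
      rw [le_div_iff₀ hε] at ha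
      rw [div_le_iff₀ hε] at hb
      rcases lt_or_ge n 0 with hneg | hpos
      · have : n ≤ -1 := by omega
        have hne : n ≠ -1 := hn.2
        have : n ≤ -2 := by omega
        have : (n:ℝ) ≤ -2 := by exact_mod_cast this
        nlinarith [hx.1, hx.2]
      · have : 1 ≤ n := by omega
        have : (1:ℝ) ≤ (n:ℝ) := by exact_mod_cast this
        nlinarith [hx.1, hx.2]
    rw [h1, mul_zero]
  rw [tsum_eq_sum hz, Finset.sum_pair (by decide : (0:ℤ) ≠ -1)]
  norm_num [sub_eq_add_neg]

lemma rhoe_integral {ρ₁ : ℝ → ℝ} (hcont : Continuous ρ₁)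
    (hsupp : ∀ x, x ∉ Set.Icc (-1 : ℝ) 1 → ρ₁ x = 0) (hint : (∫ x, ρ₁ x) = 1)
    {ε : ℝ} (hε : 0 < ε) (hε1 : ε < 1/2) :
    ∫ x in (-1:ℝ)..1, ε⁻¹ * ρ₁ (x/ε) = 1 := by
  rw [intervalIntegral.integral_const_mul, intervalIntegral.integral_comp_div (f := ρ₁) hε.ne']
  have hs : Function.support ρ₁ ⊆ Set.Ioc (-1/ε) (1/ε) := by
    intro x hxs
    have hx : x ∈ Set.Icc (-1:ℝ) 1 := by
      by_contra h
      exact hxs (hsupp x h)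
    have h2 : (2:ℝ) < 1/ε := by
      rw [lt_div_iff₀ hε]; linarith
    constructor
    · have h3 : -1/ε < -1 := by
        have : -1/ε = -(1/ε) := by ring
        rw [this]; linarith
      linarith [hx.1]
    · linarith [hx.2]
  rw [intervalIntegral.integral_eq_integral_of_support_subset hs, hint]
  simp [smul_eq_mul]
  field_simp

lemma coe_sub_one (x : ℝ) : ((x - 1 : ℝ) : UnitAddCircle) = (↑x : UnitAddCircle) := by
  rw [AddCircle.coe_sub]
  have h1 : (((1:ℝ) : ℝ) : UnitAddCircle) = 0 := AddCircle.coe_period 1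
  rw [h1, sub_zero]

lemma contF {ρ₁ : ℝ → ℝ} (hcont : Continuous ρ₁) {ε : ℝ} (k : ℤ) :
    Continuous (fun x : ℝ => (fourier k (↑x : UnitAddCircle)) * ((ε⁻¹ * ρ₁ (x/ε) : ℝ) : ℂ)) := by
  apply Continuous.mul
  · exact (map_continuous (fourier k)).comp (AddCircle.continuous_mk' 1)
  · exact Complex.continuous_ofReal.comp
      (continuous_const.mul (hcont.comp (continuous_id.div_const ε)))

set_option maxHeartbeats 1000000 in
lemma rhoHat_eq {ρ₁ : ℝ → ℝ} (hcont : Continuous ρ₁)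
    (hsupp : ∀ x, x ∉ Set.Icc (-1 : ℝ) 1 → ρ₁ x = 0)
    {ε : ℝ} (hε : 0 < ε) (hε1 : ε < 1/2) (k : ℤ) :
    rhoHat ρ₁ ε k
      = ∫ x in (-1:ℝ)..1, (fourier k (↑x : UnitAddCircle)) * ((ε⁻¹ * ρ₁ (x/ε) : ℝ) : ℂ) := by
  have hone : ρ₁ (1/ε) = 0 := by
    apply hsupp; intro h
    have := h.2
    rw [div_le_iff₀ hε] at this
    linarith
  have hmone : ρ₁ (-1/ε) = 0 := by
    apply hsupp; intro h
    have := h.1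
    rw [le_div_iff₀ hε] at this
    linarith
  have key : rhoHat ρ₁ ε k = ∫ x in (0:ℝ)..1,
      (fourier k (↑x : UnitAddCircle)) * ((ε⁻¹ * ρ₁ (x/ε) + ε⁻¹ * ρ₁ ((x-1)/ε) : ℝ) : ℂ) := by
    rw [rhoHat, ← UnitAddCircle.integral_preimage 0
      (fun z => fourier k z * (perKernel ρ₁ ε z : ℂ)),
      intervalIntegral.integral_of_le (by norm_num : (0:ℝ) ≤ 1)]
    simp only [zero_add]
    apply setIntegral_congr_fun measurableSet_Ioc
    intro x hx
    simp only
    rcases eq_or_lt_of_le hx.2 with h1 | h1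
    · subst h1
      have e1 : ((1:ℝ) : UnitAddCircle) = ((0:ℝ) : UnitAddCircle) := by
        rw [show ((0:ℝ) : UnitAddCircle) = 0 by norm_cast]
        exact AddCircle.coe_period 1
      have e2 : perKernel ρ₁ ε ((1:ℝ) : UnitAddCircle)
          = ε⁻¹ * ρ₁ ((0:ℝ)/ε) + ε⁻¹ * ρ₁ (((0:ℝ)-1)/ε) := by
        rw [e1]; exact perKernel_eq hsupp hε hε1 (by constructor <;> norm_num)
      have e3 : (ε⁻¹ * ρ₁ ((0:ℝ)/ε) + ε⁻¹ * ρ₁ (((0:ℝ)-1)/ε) : ℝ)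
          = ε⁻¹ * ρ₁ ((1:ℝ)/ε) + ε⁻¹ * ρ₁ (((1:ℝ)-1)/ε) := by
        rw [show ((0:ℝ)-1)/ε = -1/ε by ring, show ((1:ℝ)-1)/ε = (0:ℝ)/ε by ring,
          hmone, hone]
        ring
      rw [e2, e3]
    · rw [perKernel_eq hsupp hε hε1 ⟨hx.1.le, h1⟩]
  rw [key]
  have hsplit : (fun x : ℝ => (fourier k (↑x : UnitAddCircle)) *
        ((ε⁻¹ * ρ₁ (x/ε) + ε⁻¹ * ρ₁ ((x-1)/ε) : ℝ) : ℂ))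
      = fun x : ℝ => (fourier k (↑x : UnitAddCircle)) * ((ε⁻¹ * ρ₁ (x/ε) : ℝ) : ℂ)
        + (fun y : ℝ => (fourier k (↑y : UnitAddCircle)) * ((ε⁻¹ * ρ₁ (y/ε) : ℝ) : ℂ)) (x - 1) := by
    funext x
    simp only
    rw [coe_sub_one]
    push_cast
    ring
  rw [hsplit]
  have hg : IntervalIntegrable (fun x : ℝ =>
      (fun y : ℝ => (fourier k (↑y : UnitAddCircle)) * ((ε⁻¹ * ρ₁ (y/ε) : ℝ) : ℂ)) (x - 1))
      volume 0 1 :=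
    ((contF hcont k).comp (continuous_sub_right 1)).intervalIntegrable _ _
  rw [intervalIntegral.integral_add ((contF hcont k).intervalIntegrable _ _) hg,
    intervalIntegral.integral_comp_sub_right
      (fun y : ℝ => (fourier k (↑y : UnitAddCircle)) * ((ε⁻¹ * ρ₁ (y/ε) : ℝ) : ℂ)) 1,
    show (0:ℝ)-1 = -1 by norm_num, show (1:ℝ)-1 = 0 by norm_num, add_comm]
  exact intervalIntegral.integral_add_adjacent_intervals
    ((contF hcont k).intervalIntegrable _ _) ((contF hcont k).intervalIntegrable _ _)

lemma norm_exp_mul_I_sub_one_le (θ : ℝ) : ‖Complex.exp (θ * Complex.I) - 1‖ ≤ |θ| := by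
  rw [Complex.exp_mul_I]
  have h1 : (Complex.cos θ + Complex.sin θ * Complex.I - 1 : ℂ)
      = (↑(Real.cos θ - 1) : ℂ) + (↑(Real.sin θ) : ℂ) * Complex.I := by
    push_cast; ring
  rw [h1, Complex.norm_add_mul_I]
  have h2 : (Real.cos θ - 1) ^ 2 + Real.sin θ ^ 2 ≤ θ ^ 2 := by
    nlinarith [Real.sin_sq_add_cos_sq θ, Real.one_sub_sq_div_two_le_cos (x := θ)]
  calc Real.sqrt ((Real.cos θ - 1) ^ 2 + Real.sin θ ^ 2) ≤ Real.sqrt (θ ^ 2) :=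
        Real.sqrt_le_sqrt h2
    _ = |θ| := Real.sqrt_sq_eq_abs θ

lemma fourier_near_one (k : ℤ) (x : ℝ) :
    ‖(1 : ℂ) - fourier k (↑x : UnitAddCircle)‖ ≤ 2 * π * |(k:ℝ)| * |x| := by
  rw [fourier_coe_apply]
  have harg : (2 * ↑π * Complex.I * ↑k * ↑x / (1:ℝ) : ℂ)
      = ((2 * π * k * x : ℝ) : ℂ) * Complex.I := by
    push_cast; ring
  rw [harg, norm_sub_rev]
  calc ‖Complex.exp (((2 * π * k * x : ℝ) : ℂ) * Complex.I) - 1‖ ≤ |2 * π * k * x| :=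
        norm_exp_mul_I_sub_one_le _
    _ = 2 * π * |(k:ℝ)| * |x| := by
        rw [abs_mul, abs_mul, abs_mul]
        simp [abs_of_nonneg Real.pi_pos.le]

lemma fourier_le_two (k : ℤ) (z : UnitAddCircle) : ‖(1 : ℂ) - fourier k z‖ ≤ 2 := by
  calc ‖(1 : ℂ) - fourier k z‖ ≤ ‖(1:ℂ)‖ + ‖fourier k z‖ := norm_sub_le _ _
    _ = 2 := by rw [norm_one, (by exact Circle.norm_coe _ : ‖fourier k z‖ = 1)]; norm_num

lemma rhoHat_sub_one_norm {ρ₁ : ℝ → ℝ} (hcont : Continuous ρ₁) (hpos : ∀ x, 0 ≤ ρ₁ x)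
    (hsupp : ∀ x, x ∉ Set.Icc (-1 : ℝ) 1 → ρ₁ x = 0) (hint : (∫ x, ρ₁ x) = 1)
    {ε : ℝ} (hε : 0 < ε) (hε1 : ε < 1/2) (k : ℤ) :
    ‖1 - rhoHat ρ₁ ε k‖ ≤ min 2 (2 * π * |(k:ℝ)| * ε) := by
  set B := min 2 (2 * π * |(k:ℝ)| * ε) with hB
  have hB0 : 0 ≤ B := le_min (by norm_num) (by positivity)
  have h1 : (1:ℂ) = ∫ x in (-1:ℝ)..1, ((ε⁻¹ * ρ₁ (x/ε) : ℝ) : ℂ) := by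
    rw [intervalIntegral.integral_ofReal, rhoe_integral hcont hsupp hint hε hε1]
    norm_num
  rw [rhoHat_eq hcont hsupp hε hε1 k]
  nth_rewrite 1 [h1]
  have hsub : (∫ x in (-1:ℝ)..1, ((ε⁻¹ * ρ₁ (x/ε) : ℝ) : ℂ))
      - (∫ x in (-1:ℝ)..1, (fourier k (↑x : UnitAddCircle)) * ((ε⁻¹ * ρ₁ (x/ε) : ℝ) : ℂ))
      = ∫ x in (-1:ℝ)..1,
          ((1:ℂ) - fourier k (↑x : UnitAddCircle)) * ((ε⁻¹ * ρ₁ (x/ε) : ℝ) : ℂ) := by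
    have hf : IntervalIntegrable (fun x : ℝ => ((ε⁻¹ * ρ₁ (x/ε) : ℝ) : ℂ)) volume (-1) 1 :=
      (Complex.continuous_ofReal.comp
        (continuous_const.mul (hcont.comp (continuous_id.div_const ε)))).intervalIntegrable _ _
    rw [← intervalIntegral.integral_sub hf ((contF hcont k).intervalIntegrable _ _)]
    congr 1
    funext x
    ring
  rw [hsub]
  have hbound : ∀ x : ℝ, ‖((1:ℂ) - fourier k (↑x : UnitAddCircle)) * ((ε⁻¹ * ρ₁ (x/ε) : ℝ) : ℂ)‖
      ≤ B * (ε⁻¹ * ρ₁ (x/ε)) := by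
    intro x
    have hnn : (0:ℝ) ≤ ε⁻¹ * ρ₁ (x/ε) := mul_nonneg (inv_nonneg.2 hε.le) (hpos _)
    rw [norm_mul, Complex.norm_real, Real.norm_eq_abs, abs_of_nonneg hnn]
    by_cases hx : |x| ≤ ε
    · apply mul_le_mul_of_nonneg_right _ hnn
      apply le_min (fourier_le_two k _)
      calc ‖(1:ℂ) - fourier k (↑x : UnitAddCircle)‖ ≤ 2 * π * |(k:ℝ)| * |x| :=
            fourier_near_one k x
        _ ≤ 2 * π * |(k:ℝ)| * ε := by
            apply mul_le_mul_of_nonneg_left hx (by positivity)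
    · have : ρ₁ (x/ε) = 0 := by
        apply hsupp
        intro hmem
        obtain ⟨ha, hb⟩ := hmem
        rw [le_div_iff₀ hε] at ha
        rw [div_le_iff₀ hε] at hb
        exact hx (abs_le.2 ⟨by linarith, by linarith⟩)
      rw [this]
      simp
  calc ‖∫ x in (-1:ℝ)..1,
        ((1:ℂ) - fourier k (↑x : UnitAddCircle)) * ((ε⁻¹ * ρ₁ (x/ε) : ℝ) : ℂ)‖
      ≤ |∫ x in (-1:ℝ)..1, B * (ε⁻¹ * ρ₁ (x/ε))| := by
        apply intervalIntegral.norm_integral_le_abs_of_norm_le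
        · exact Filter.Eventually.of_forall (fun t => hbound t)
        · exact (continuous_const.mul
            (continuous_const.mul (hcont.comp (continuous_id.div_const ε)))).intervalIntegrable _ _
    _ = B := by
        rw [intervalIntegral.integral_const_mul, rhoe_integral hcont hsupp hint hε hε1,
          mul_one, abs_of_nonneg hB0]

lemma min_le_rpow_aux {ε m t : ℝ} (hε : 0 < ε) (hm : 1 ≤ m) (ht : 0 ≤ t) (ht1 : t ≤ 1) :
    min 2 (2 * π * m * ε) ≤ 2 * π * (ε * m) ^ t := by
  have hp : (0:ℝ) < ε * m := by positivity
  by_cases h : ε * m ≤ 1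
  · refine (min_le_right _ _).trans ?_
    have : ε * m ≤ (ε * m) ^ t := by
      calc ε * m = (ε * m) ^ (1:ℝ) := (Real.rpow_one _).symm
        _ ≤ (ε * m) ^ t := Real.rpow_le_rpow_of_exponent_ge hp h ht1
    nlinarith [Real.pi_pos]
  · refine (min_le_left _ _).trans ?_
    have h1 : (1:ℝ) ≤ (ε * m) ^ t := Real.one_le_rpow (by linarith) ht
    nlinarith [Real.pi_gt_three]


/-- **Proposition 2.14, d = 1.** For `0 < γ ≤ s < 1` and `ε ∈ (0, ε₀)`,
`∑_{k≠0} |k|^{-2s} |1 - ρ̂_ε(k)|² |σ̂_k|² ≤ C ε^{2(s-γ)} ∑_{k≠0} |k|^{-2γ} |σ̂_k|²`,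
i.e. `‖σ - ρ_ε * σ‖_{Ḣ^{-s}} ≲ ε^{s-γ} ‖σ‖_{Ḣ^{-γ}}`, with `C` depending only on `ρ₁`. -/
theorem stmt6 (ε₀ : ℝ) (hε₀ : ε₀ ∈ Set.Ioo (0 : ℝ) (1 / 2))
    (ρ₁ : ℝ → ℝ) (hcont : Continuous ρ₁) (hpos : ∀ x, 0 ≤ ρ₁ x)
    (hsupp : ∀ x, x ∉ Set.Icc (-1 : ℝ) 1 → ρ₁ x = 0) (hint : (∫ x, ρ₁ x) = 1) :
    ∃ C : ℝ, 0 < C ∧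
      ∀ s γ : ℝ, 0 < γ → γ ≤ s → s < 1 →
      ∀ σ : SignedMeasure UnitAddCircle, σ Set.univ = 0 →
      ∀ ε : ℝ, ε ∈ Set.Ioo (0 : ℝ) ε₀ →
        (∑' k : ℤ, if k = 0 then 0 else
            (k.natAbs : ℝ≥0∞) ^ (-(2 * s)) * (‖1 - rhoHat ρ₁ ε k‖₊ : ℝ≥0∞) ^ 2 *
              (‖sfc σ k‖₊ : ℝ≥0∞) ^ 2)
          ≤ ENNReal.ofReal (C * ε ^ (2 * (s - γ))) *
            ∑' k : ℤ, if k = 0 then 0 else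
              (k.natAbs : ℝ≥0∞) ^ (-(2 * γ)) * (‖sfc σ k‖₊ : ℝ≥0∞) ^ 2 := by
  refine ⟨4 * π ^ 2, by positivity, ?_⟩
  intro s γ hγ hγs hs σ hσ ε hε
  obtain ⟨hε0, hεε₀⟩ := hε
  have hε1 : ε < 1/2 := hεε₀.trans hε₀.2
  set t : ℝ := s - γ with hts
  have ht0 : 0 ≤ t := by simp [hts]; linarith
  have ht1 : t ≤ 1 := by simp [hts]; linarith
  rw [← ENNReal.tsum_mul_left]
  apply ENNReal.tsum_le_tsum
  intro k
  by_cases hk : k = 0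
  · simp [hk]
  · simp only [if_neg hk]
    set m : ℝ := (k.natAbs : ℝ) with hm
    have hm1 : (1:ℝ) ≤ m := by
      rw [hm]
      exact_mod_cast Nat.one_le_iff_ne_zero.2 (Int.natAbs_ne_zero.2 hk)
    have habs : |(k:ℝ)| = m := by
      rw [hm, Nat.cast_natAbs, Int.cast_abs]
    have hb : ‖1 - rhoHat ρ₁ ε k‖ ≤ 2 * π * (ε * m) ^ t := by
      refine (rhoHat_sub_one_norm hcont hpos hsupp hint hε0 hε1 k).trans ?_
      rw [habs]
      exact min_le_rpow_aux hε0 hm1 ht0 ht1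
    set N : ℝ≥0∞ := (k.natAbs : ℝ≥0∞) with hN
    have hN0 : N ≠ 0 := by
      simp [hN, Int.natAbs_ne_zero.2 hk]
    have hNtop : N ≠ ⊤ := by simp [hN]
    have h1 : (‖1 - rhoHat ρ₁ ε k‖₊ : ℝ≥0∞) ^ 2
        ≤ ENNReal.ofReal ((2 * π * (ε * m) ^ t) ^ 2) := by
      show (‖1 - rhoHat ρ₁ ε k‖ₑ) ^ 2 ≤ _
      rw [← ofReal_norm, ← ENNReal.ofReal_pow (norm_nonneg _)]
      exact ENNReal.ofReal_le_ofReal (pow_le_pow_left₀ (norm_nonneg _) hb 2)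
    have h4 : ((ε * m) ^ t) ^ (2:ℕ) = (ε * m) ^ (2 * t) := by
      rw [← Real.rpow_natCast ((ε * m) ^ t) 2,
        ← Real.rpow_mul (by positivity : (0:ℝ) ≤ ε * m)]
      congr 1
      push_cast
      ring
    have hreal : (2 * π * (ε * m) ^ t) ^ 2 = (4 * π ^ 2 * ε ^ (2 * t)) * m ^ (2 * t) := by
      rw [mul_pow, mul_pow, h4, Real.mul_rpow hε0.le (by linarith : (0:ℝ) ≤ m)]
      ring
    have h2 : ENNReal.ofReal ((2 * π * (ε * m) ^ t) ^ 2)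
        = ENNReal.ofReal (4 * π ^ 2 * ε ^ (2 * t)) * N ^ (2 * t) := by
      have h5 : ENNReal.ofReal (m ^ (2 * t)) = N ^ (2 * t) := by
        rw [← ENNReal.ofReal_rpow_of_pos (by linarith : (0:ℝ) < m)]
        congr 1
        rw [hm, ENNReal.ofReal_natCast]
      rw [hreal, ENNReal.ofReal_mul (by positivity), h5]
    have h3 : N ^ (-(2 * s)) * N ^ (2 * t) = N ^ (-(2 * γ)) := by
      rw [← ENNReal.rpow_add _ _ hN0 hNtop]
      congr 1
      rw [hts]; ring
    calc N ^ (-(2 * s)) * (‖1 - rhoHat ρ₁ ε k‖₊ : ℝ≥0∞) ^ 2 * (‖sfc σ k‖₊ : ℝ≥0∞) ^ 2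
        ≤ N ^ (-(2 * s)) * (ENNReal.ofReal (4 * π ^ 2 * ε ^ (2 * t)) * N ^ (2 * t))
            * (‖sfc σ k‖₊ : ℝ≥0∞) ^ 2 := by
          gcongr
          rw [← h2]
          exact h1
      _ = ENNReal.ofReal (4 * π ^ 2 * ε ^ (2 * t)) *
            (N ^ (-(2 * s)) * N ^ (2 * t) * (‖sfc σ k‖₊ : ℝ≥0∞) ^ 2) := by ring
      _ = ENNReal.ofReal (4 * π ^ 2 * ε ^ (2 * (s - γ))) *
            (N ^ (-(2 * γ)) * (‖sfc σ k‖₊ : ℝ≥0∞) ^ 2) := by rw [h3, hts]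
end
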